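/- For every k ≥ 1, the group presented by 𝒢̃_k = ⟨x, y | x⁻²y⁻¹xy, y⁻¹x^(−k+1)yx⁻¹y⁻¹⟩ is the trivial group. -/

import Mathlib

/-!
Write `x, y` for the generators and `m = 1 - k`. The first relation says that conjugation by `y`
squares `x`, so conjugating `x ^ m` by `y` gives `x ^ (2m)`; the second relation says this equals
`y * x`. Hence `y = x ^ (2m - 1)` commutes with `x`, and the first relation collapses to `x = x²`.
-/

theorem PresentedGroup.subsingleton_of_forall_of_eq_one {α : Type*} {rels : Set (FreeGroup α)}
    (h : ∀ a, (of a : PresentedGroup rels) = 1) : Subsingleton (PresentedGroup rels) :=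
  subsingleton_of_forall_eq 1 fun g =>
    Subgroup.mem_bot.mp <| generated_by rels ⊥ (fun a => Subgroup.mem_bot.mpr (h a)) g

theorem eq_one_of_gordon_relations {G : Type*} [Group G] {x y : G} (m : ℤ)
    (h₁ : x⁻¹ * x⁻¹ * y⁻¹ * x * y = 1) (h₂ : y⁻¹ * x ^ m * y * x⁻¹ * y⁻¹ = 1) :
    x = 1 ∧ y = 1 := by
  have hsq : y⁻¹ * x * y = x * x :=
    calc y⁻¹ * x * y = x * x * (x⁻¹ * x⁻¹ * y⁻¹ * x * y) := by group
      _ = x * x := by rw [h₁, mul_one]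
  have hrel : y⁻¹ * x ^ m * y = y * x :=
    calc y⁻¹ * x ^ m * y = (y⁻¹ * x ^ m * y * x⁻¹ * y⁻¹) * (y * x) := by group
      _ = y * x := by rw [h₂, one_mul]
  have hpow : y⁻¹ * x ^ m * y = x ^ (2 * m) := by
    rw [zpow_mul, zpow_two, ← hsq]
    simpa only [inv_inv] using (conj_zpow (a := y⁻¹) (b := x) (i := m)).symm
  have hy : y = x ^ (2 * m - 1) := by
    rw [zpow_sub_one, ← hpow, hrel, mul_inv_cancel_right]
  have hcomm : Commute x y := hy ▸ Commute.self_zpow x _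
  have hx1 : x = 1 := by
    rwa [mul_assoc, hcomm.eq, inv_mul_cancel_left, left_eq_mul] at hsq
  exact ⟨hx1, by rw [hy, hx1, one_zpow]⟩

theorem stmt_17_general (k : ℕ) :
    Subsingleton (PresentedGroup
      ({(FreeGroup.of true)⁻¹ * (FreeGroup.of true)⁻¹ * (FreeGroup.of false)⁻¹ *
          FreeGroup.of true * FreeGroup.of false,
        (FreeGroup.of false)⁻¹ * FreeGroup.of true ^ ((1 : ℤ) - (k : ℤ)) *
          FreeGroup.of false * (FreeGroup.of true)⁻¹ * (FreeGroup.of false)⁻¹} :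
        Set (FreeGroup Bool))) := by
  refine PresentedGroup.subsingleton_of_forall_of_eq_one <| Bool.forall_bool.mpr
    (eq_one_of_gordon_relations (x := PresentedGroup.of true) (y := PresentedGroup.of false)
      (1 - k) ?_ ?_).symm
  · exact PresentedGroup.one_of_mem (Set.mem_insert _ _)
  · exact PresentedGroup.one_of_mem (Set.mem_insert_of_mem _ rfl)

/-- For every k ≥ 1, the presentation 𝒢̃ₖ = ⟨x, y | x⁻²y⁻¹xy, y⁻¹x^(−k+1)yx⁻¹y⁻¹⟩
presents the trivial group. -/
theorem stmt_17 (k : ℕ) (hk : 1 ≤ k) :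
    Subsingleton (PresentedGroup
      ({(FreeGroup.of true)⁻¹ * (FreeGroup.of true)⁻¹ * (FreeGroup.of false)⁻¹ *
          FreeGroup.of true * FreeGroup.of false,
        (FreeGroup.of false)⁻¹ * FreeGroup.of true ^ ((1 : ℤ) - (k : ℤ)) *
          FreeGroup.of false * (FreeGroup.of true)⁻¹ * (FreeGroup.of false)⁻¹} :
        Set (FreeGroup Bool))) :=
  stmt_17_general k
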